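/- arXiv:quant-ph/0302200 — 3 statements merged into one kernel-verified Lean document; each statement's English description precedes it below -/
import Mathlib

section
/- Let G be a l.c.s.c. group, K a closed normal subgroup, X = G/K. A Borel measure μ on G belongs to M_{G,K} if and only if dμ = ρ dμ_G for a non-negative Borel function ρ : G → ℝ (unique modulo μ_G-null sets) satisfying ∫_K ρ(s(x)k) dμ_K(k) = 1 for μ_X-almost all x ∈ X, where this integral does not depend on the choice of Borel section s. Moreover M_{G,K} is non-empty. -/
open MeasureTheory
open scoped ENNReal Pointwise

/-- **Complete characterization of `M_{G,K}`.** With Haar measures normalized so that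
`∫_G f dμ_G = ∫_{X×K} f(s(x)k) d(μ_X ⊗ μ_K)`, the set `M_{G,K}` is nonempty, and a Borel
measure `μ'` on `G` belongs to `M_{G,K}` iff `dμ' = ρ dμ_G` for a non-negative Borel
density `ρ` with `∫_K ρ(s(x)k) dμ_K(k) = 1` for `μ_X`-a.e. `x`; the density is unique
up to `μ_G`-null sets and the a.e. condition does not depend on the Borel section. -/
theorem M_GK_characterization
    {G : Type*} [Group G] [TopologicalSpace G] [IsTopologicalGroup G]
    [LocallyCompactSpace G] [SecondCountableTopology G]
    [MeasurableSpace G] [BorelSpace G]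
    (K : Subgroup G) [K.Normal] (hKclosed : IsClosed (K : Set G))
    [MeasurableSpace (G ⧸ K)] [BorelSpace (G ⧸ K)]
    [MeasurableSpace K] [BorelSpace K]
    (μG : Measure G) [μG.IsHaarMeasure]
    (μX : Measure (G ⧸ K)) [μX.IsHaarMeasure]
    (μK : Measure K) [μK.IsHaarMeasure]
    -- a Borel section s
    (s : G ⧸ K → G) (hs_meas : Measurable s)
    (hs_sec : ∀ x : G ⧸ K, QuotientGroup.mk (s x) = x) (hs_one : s 1 = 1)
    -- compatible normalization of the Haar measures
    (hnorm : ∀ f : G → ℝ≥0∞, Measurable f →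
      ∫⁻ g, f g ∂μG = ∫⁻ p : (G ⧸ K) × K, f (s p.1 * (p.2 : G)) ∂μX.prod μK) :
    -- M_{G,K} is nonempty
    (∃ μ' : Measure G, μ' ≪ μG ∧
      ∀ C : Set G, IsCompact C →
        μ' (C * (K : Set G)) = μX ((QuotientGroup.mk : G → G ⧸ K) '' C)) ∧
    -- characterization of the measures in M_{G,K} by their densities
    (∀ μ' : Measure G,
      (μ' ≪ μG ∧
        ∀ C : Set G, IsCompact C →
          μ' (C * (K : Set G)) = μX ((QuotientGroup.mk : G → G ⧸ K) '' C)) ↔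
      (∃ ρ : G → ℝ, Measurable ρ ∧ (∀ g, 0 ≤ ρ g) ∧
        μ' = μG.withDensity (fun g => ENNReal.ofReal (ρ g)) ∧
        (∀ᵐ x ∂μX, ∫⁻ k : K, ENNReal.ofReal (ρ (s x * (k : G))) ∂μK = 1))) ∧
    -- essential uniqueness of the density
    (∀ ρ₁ ρ₂ : G → ℝ, Measurable ρ₁ → Measurable ρ₂ →
      (∀ g, 0 ≤ ρ₁ g) → (∀ g, 0 ≤ ρ₂ g) →
      μG.withDensity (fun g => ENNReal.ofReal (ρ₁ g)) =
        μG.withDensity (fun g => ENNReal.ofReal (ρ₂ g)) →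
      ρ₁ =ᵐ[μG] ρ₂) ∧
    -- the a.e. fibre-normalization condition does not depend on the Borel section
    (∀ ρ : G → ℝ, Measurable ρ → (∀ g, 0 ≤ ρ g) →
      ∀ s' : G ⧸ K → G, Measurable s' →
        (∀ x : G ⧸ K, QuotientGroup.mk (s' x) = x) →
        ((∀ᵐ x ∂μX, ∫⁻ k : K, ENNReal.ofReal (ρ (s x * (k : G))) ∂μK = 1) ↔
          (∀ᵐ x ∂μX, ∫⁻ k : K, ENNReal.ofReal (ρ (s' x * (k : G))) ∂μK = 1))) := by
  classical
  haveI hKc : IsClosed (K : Set G) := hKclosed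
  haveI : T2Space (G ⧸ K) := inferInstance
  haveI : SigmaCompactSpace (K : Set G) := hKclosed.sigmaCompactSpace
  haveI : SigmaFinite μK := inferInstance
  haveI : SigmaFinite μX := inferInstance
  haveI : SigmaFinite μG := inferInstance
  set p : G → G ⧸ K := (QuotientGroup.mk : G → G ⧸ K) with hp_def
  have hp_cont : Continuous p := QuotientGroup.continuous_mk
  have hp_meas : Measurable p := hp_cont.measurable
  have hcoe_meas : Measurable ((↑) : K → G) := continuous_subtype_val.measurable
  -- p (s x * k) = x
  have hmul : ∀ (x : G ⧸ K) (k : K), p (s x * (k : G)) = x := by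
    intro x k
    have hk : (QuotientGroup.mk (k : G) : G ⧸ K) = 1 := (QuotientGroup.eq_one_iff _).2 k.2
    show (QuotientGroup.mk (s x * (k : G)) : G ⧸ K) = x
    rw [QuotientGroup.mk_mul, hk, mul_one]
    exact hs_sec x
  -- C * K = p⁻¹ (p '' C)
  have hCK : ∀ C : Set G, C * (K : Set G) = p ⁻¹' (p '' C) := by
    intro C
    ext g
    constructor
    · rintro hg
      rcases Set.mem_mul.1 hg with ⟨c, hc, k, hk, rfl⟩
      refine ⟨c, hc, ?_⟩
      show (QuotientGroup.mk c : G ⧸ K) = QuotientGroup.mk (c * k)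
      rw [QuotientGroup.mk_mul, (QuotientGroup.eq_one_iff _).2 hk, mul_one]
    · rintro ⟨c, hc, hcg⟩
      have hmem : c⁻¹ * g ∈ K := QuotientGroup.eq.1 hcg
      exact Set.mem_mul.2 ⟨c, hc, c⁻¹ * g, hmem, by group⟩
  -- the map φ : (x, k) ↦ s x * k is measurable
  have hφ_meas : Measurable (fun q : (G ⧸ K) × K => s q.1 * ((q.2 : K) : G)) :=
    (hs_meas.comp measurable_fst).mul (hcoe_meas.comp measurable_snd)
  -- Key disintegration lemma
  have keyL : ∀ (ρt : G → ℝ≥0∞), Measurable ρt → ∀ D : Set (G ⧸ K), MeasurableSet D →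
      (μG.withDensity ρt) (p ⁻¹' D)
        = ∫⁻ x in D, ∫⁻ k : K, ρt (s x * (k : G)) ∂μK ∂μX := by
    intro ρt hρt D hD
    have hDp : MeasurableSet (p ⁻¹' D) := hp_meas hD
    rw [withDensity_apply _ hDp, ← lintegral_indicator hDp,
      hnorm _ (hρt.indicator hDp),
      lintegral_prod (fun q : (G ⧸ K) × K => (p ⁻¹' D).indicator ρt (s q.1 * ((q.2 : K) : G)))
        (((hρt.indicator hDp).comp hφ_meas).aemeasurable)]
    rw [← lintegral_indicator hD]
    refine lintegral_congr fun x => ?_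
    by_cases hx : x ∈ D
    · have h1 : ∀ k : K, s x * (k : G) ∈ p ⁻¹' D := fun k => by
        simpa [Set.mem_preimage, hmul x k] using hx
      simp only [Set.indicator_of_mem hx]
      refine lintegral_congr fun k => ?_
      simp [Set.indicator_of_mem (h1 k)]
    · have h1 : ∀ k : K, s x * (k : G) ∉ p ⁻¹' D := fun k => by
        simpa [Set.mem_preimage, hmul x k] using hx
      simp only [Set.indicator_of_notMem hx]
      rw [← lintegral_zero (μ := μK)]
      refine lintegral_congr fun k => ?_
      simp [Set.indicator_of_notMem (h1 k)]
  -- every compact of the quotient lifts to a compact of G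
  have hlift : ∀ D : Set (G ⧸ K), IsCompact D → ∃ C : Set G, IsCompact C ∧ p '' C = D := by
    intro D hD
    choose V hVc hVn using fun x : G ⧸ K => exists_compact_mem_nhds (s x)
    have hcover : D ⊆ ⋃ x : G ⧸ K, p '' interior (V x) := by
      intro d hd
      exact Set.mem_iUnion.2 ⟨d, ⟨s d, mem_interior_iff_mem_nhds.2 (hVn d), hs_sec d⟩⟩
    obtain ⟨t, ht⟩ := hD.elim_finite_subcover (fun x => p '' interior (V x))
      (fun x => QuotientGroup.isOpenMap_coe _ isOpen_interior) hcover
    refine ⟨(⋃ x ∈ t, V x) ∩ p ⁻¹' D, ?_, ?_⟩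
    · exact ((t.finite_toSet.isCompact_biUnion fun x _ => hVc x).inter_right
        (hD.isClosed.preimage hp_cont))
    · apply Set.Subset.antisymm
      · rintro _ ⟨g, ⟨_, hg2⟩, rfl⟩; exact hg2
      · intro d hd
        rcases Set.mem_iUnion₂.1 (ht hd) with ⟨x, hx, g, hg, rfl⟩
        exact ⟨g, ⟨Set.mem_biUnion hx (interior_subset hg), hd⟩, rfl⟩
  -- extensionality: a measure agreeing with μX on compacts equals μX
  have hext : ∀ ν : Measure (G ⧸ K), (∀ D : Set (G ⧸ K), IsCompact D → ν D = μX D) →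
      ν = μX := by
    intro ν hν
    have hgen : (inferInstance : MeasurableSpace (G ⧸ K))
        = MeasurableSpace.generateFrom {D : Set (G ⧸ K) | IsCompact D} := by
      apply le_antisymm
      · rw [BorelSpace.measurable_eq (α := G ⧸ K), borel_eq_generateFrom_isClosed]
        refine MeasurableSpace.generateFrom_le fun F hF => ?_
        have : F = ⋃ n, F ∩ compactCovering (G ⧸ K) n := by
          rw [← Set.inter_iUnion, iUnion_compactCovering, Set.inter_univ]
        rw [this]
        exact MeasurableSet.iUnion fun n =>
          MeasurableSpace.measurableSet_generateFrom
            ((isCompact_compactCovering (G ⧸ K) n).inter_left hF)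
      · refine MeasurableSpace.generateFrom_le fun D hD => ?_
        exact hD.isClosed.measurableSet
    refine Measure.ext_of_generateFrom_of_iUnion {D : Set (G ⧸ K) | IsCompact D}
      (compactCovering (G ⧸ K)) hgen ?_ (iUnion_compactCovering _)
      (fun n => isCompact_compactCovering _ n) (fun n => ?_) (fun D hD => hν D hD)
    · intro D₁ h₁ D₂ h₂ _
      exact h₁.inter_right h₂.isClosed
    · rw [hν _ (isCompact_compactCovering _ n)]
      exact (isCompact_compactCovering (G ⧸ K) n).measure_lt_top.ne
  -- the converse direction of the characterization
  have hconv : ∀ ρ : G → ℝ, Measurable ρ → (∀ g, 0 ≤ ρ g) →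
      (∀ᵐ x ∂μX, ∫⁻ k : K, ENNReal.ofReal (ρ (s x * (k : G))) ∂μK = 1) →
      (μG.withDensity (fun g => ENNReal.ofReal (ρ g)) ≪ μG ∧
        ∀ C : Set G, IsCompact C →
          (μG.withDensity (fun g => ENNReal.ofReal (ρ g))) (C * (K : Set G))
            = μX ((QuotientGroup.mk : G → G ⧸ K) '' C)) := by
    intro ρ hρ hρ0 hfib
    refine ⟨withDensity_absolutelyContinuous _ _, fun C hC => ?_⟩
    have hD : MeasurableSet (p '' C) := (hC.image hp_cont).isClosed.measurableSet
    rw [hCK C, keyL _ (hρ.ennreal_ofReal) _ hD]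
    calc ∫⁻ x in p '' C, ∫⁻ k : K, ENNReal.ofReal (ρ (s x * (k : G))) ∂μK ∂μX
        = ∫⁻ _x in p '' C, (1 : ℝ≥0∞) ∂μX := by
          refine setLIntegral_congr_fun_ae hD ?_
          filter_upwards [hfib] with x hx _ using hx
      _ = μX (p '' C) := by simp
  -- the forward direction of the characterization
  have hfwd : ∀ μ' : Measure G, μ' ≪ μG →
      (∀ C : Set G, IsCompact C →
        μ' (C * (K : Set G)) = μX ((QuotientGroup.mk : G → G ⧸ K) '' C)) →
      ∃ ρ : G → ℝ, Measurable ρ ∧ (∀ g, 0 ≤ ρ g) ∧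
        μ' = μG.withDensity (fun g => ENNReal.ofReal (ρ g)) ∧
        (∀ᵐ x ∂μX, ∫⁻ k : K, ENNReal.ofReal (ρ (s x * (k : G))) ∂μK = 1) := by
    intro μ' hac hcomp
    haveI : SigmaFinite μ' := by
      have hsp : ∀ n, μ' (p ⁻¹' (p '' compactCovering G n)) < ∞ := by
        intro n
        have h := hcomp _ (isCompact_compactCovering G n)
        rw [hCK] at h
        rw [h]
        exact ((isCompact_compactCovering G n).image hp_cont).measure_lt_top
      exact ⟨⟨{ set := fun n => p ⁻¹' (p '' compactCovering G n)
                set_mem := fun _ => trivial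
                finite := hsp
                spanning := Set.eq_univ_of_univ_subset (by
                  rw [← iUnion_compactCovering G]
                  exact Set.iUnion_mono fun n => Set.subset_preimage_image p _) }⟩⟩
    set ρ : G → ℝ := fun g => (μ'.rnDeriv μG g).toReal with hρ_def
    have hρ_meas : Measurable ρ := (Measure.measurable_rnDeriv μ' μG).ennreal_toReal
    have hρ0 : ∀ g, 0 ≤ ρ g := fun g => ENNReal.toReal_nonneg
    have hwd : μG.withDensity (fun g => ENNReal.ofReal (ρ g)) = μ' := by
      have h1 : (fun g => ENNReal.ofReal (ρ g)) =ᵐ[μG] μ'.rnDeriv μG := by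
        filter_upwards [Measure.rnDeriv_lt_top μ' μG] with g hg
        simp [hρ_def, ENNReal.ofReal_toReal hg.ne]
      rw [withDensity_congr_ae h1]
      exact Measure.withDensity_rnDeriv_eq μ' μG hac
    refine ⟨ρ, hρ_meas, hρ0, hwd.symm, ?_⟩
    -- fibre condition
    set F : G ⧸ K → ℝ≥0∞ := fun x => ∫⁻ k : K, ENNReal.ofReal (ρ (s x * (k : G))) ∂μK
      with hF_def
    have hF_meas : Measurable F := by
      apply Measurable.lintegral_prod_right
      exact (hρ_meas.ennreal_ofReal).comp hφ_meas
    have hνeq : μX.withDensity F = μX := by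
      apply hext
      intro D hD
      obtain ⟨C, hC, rfl⟩ := hlift D hD
      have hDm : MeasurableSet (p '' C) := (hC.image hp_cont).isClosed.measurableSet
      rw [withDensity_apply _ hDm]
      have := keyL (fun g => ENNReal.ofReal (ρ g)) hρ_meas.ennreal_ofReal _ hDm
      rw [hwd] at this
      rw [← this, ← hCK]
      exact hcomp C hC
    have hF1 : F =ᵐ[μX] 1 := by
      have h1 := Measure.rnDeriv_withDensity μX hF_meas
      rw [hνeq] at h1
      exact h1.symm.trans (Measure.rnDeriv_self μX)
    filter_upwards [hF1] with x hx using hx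
  -- assemble all parts
  refine ⟨?_, ?_, ?_, ?_⟩
  · -- nonemptiness, via an explicit density
    obtain ⟨n, hn⟩ : ∃ n, μK (compactCovering K n) ≠ 0 := by
      by_contra h
      push_neg at h
      have : μK (⋃ n, compactCovering K n) = 0 := measure_iUnion_null h
      rw [iUnion_compactCovering] at this
      exact (isOpen_univ.measure_ne_zero μK Set.univ_nonempty) this
    set A : Set K := toMeasurable μK (compactCovering K n) with hA_def
    have hA_meas : MeasurableSet A := measurableSet_toMeasurable _ _
    have hA_eq : μK A = μK (compactCovering K n) := measure_toMeasurable _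
    have hA_ne : μK A ≠ 0 := by rw [hA_eq]; exact hn
    have hA_fin : μK A ≠ ∞ := by
      rw [hA_eq]; exact (isCompact_compactCovering K n).measure_lt_top.ne
    set c : ℝ := (μK A).toReal with hc_def
    have hc_pos : 0 < c := ENNReal.toReal_pos hA_ne hA_fin
    have hr_mem : ∀ g : G, (s (p g))⁻¹ * g ∈ K := by
      intro g
      rw [← QuotientGroup.eq_one_iff]
      show ((QuotientGroup.mk ((s (p g))⁻¹ * g)) : G ⧸ K) = 1
      rw [QuotientGroup.mk_mul, QuotientGroup.mk_inv,
        show (QuotientGroup.mk (s (p g)) : G ⧸ K) = p g from hs_sec (p g)]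
      exact inv_mul_cancel _
    set r : G → K := fun g => ⟨(s (p g))⁻¹ * g, hr_mem g⟩ with hr_def
    have hcoe_emb : MeasurableEmbedding ((↑) : K → G) :=
      Topology.IsEmbedding.measurableEmbedding Topology.IsEmbedding.subtypeVal
        (by simpa [Subtype.range_coe] using hKclosed.measurableSet)
    have hr_meas : Measurable r := by
      rw [← hcoe_emb.measurable_comp_iff]
      exact ((hs_meas.comp hp_meas).inv.mul measurable_id)
    set ρ : G → ℝ := fun g => c⁻¹ * A.indicator (fun _ => (1 : ℝ)) (r g) with hρ_def
    have hρ_meas : Measurable ρ :=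
      ((measurable_one.indicator hA_meas).comp hr_meas).const_mul _
    have hρ0 : ∀ g, 0 ≤ ρ g := fun g =>
      mul_nonneg (inv_nonneg.2 hc_pos.le)
        (Set.indicator_nonneg (fun _ _ => zero_le_one) _)
    have hfib : ∀ᵐ x ∂μX, ∫⁻ k : K, ENNReal.ofReal (ρ (s x * (k : G))) ∂μK = 1 := by
      refine Filter.Eventually.of_forall fun x => ?_
      have hr_eval : ∀ k : K, r (s x * (k : G)) = k := by
        intro k
        apply Subtype.ext
        show (s (p (s x * (k : G))))⁻¹ * (s x * (k : G)) = (k : G)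
        rw [hmul x k]
        group
      have hpt : ∀ k : K, ENNReal.ofReal (ρ (s x * (k : G)))
          = A.indicator (fun _ => ENNReal.ofReal c⁻¹) k := by
        intro k
        rw [hρ_def]
        simp only [hr_eval k]
        by_cases hk : k ∈ A
        · simp [Set.indicator_of_mem hk]
        · simp [Set.indicator_of_notMem hk]
      calc ∫⁻ k : K, ENNReal.ofReal (ρ (s x * (k : G))) ∂μK
          = ∫⁻ k : K, A.indicator (fun _ => ENNReal.ofReal c⁻¹) k ∂μK :=
            lintegral_congr hpt
        _ = ENNReal.ofReal c⁻¹ * μK A := lintegral_indicator_const hA_meas _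
        _ = ENNReal.ofReal c⁻¹ * ENNReal.ofReal c := by
            rw [hc_def, ENNReal.ofReal_toReal hA_fin]
        _ = 1 := by
            rw [← ENNReal.ofReal_mul (inv_nonneg.2 hc_pos.le),
              inv_mul_cancel₀ hc_pos.ne', ENNReal.ofReal_one]
    obtain ⟨h1, h2⟩ := hconv ρ hρ_meas hρ0 hfib
    exact ⟨_, h1, h2⟩
  · -- characterization
    intro μ'
    constructor
    · rintro ⟨hac, hcomp⟩
      exact hfwd μ' hac hcomp
    · rintro ⟨ρ, hρ_meas, hρ0, rfl, hfib⟩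
      exact hconv ρ hρ_meas hρ0 hfib
  · -- uniqueness
    intro ρ₁ ρ₂ h₁ h₂ h₁0 h₂0 heq
    have e₁ := Measure.rnDeriv_withDensity μG h₁.ennreal_ofReal
    have e₂ := Measure.rnDeriv_withDensity μG h₂.ennreal_ofReal
    rw [heq] at e₁
    have : (fun g => ENNReal.ofReal (ρ₁ g)) =ᵐ[μG] fun g => ENNReal.ofReal (ρ₂ g) :=
      e₁.symm.trans e₂
    filter_upwards [this] with g hg
    have := congrArg ENNReal.toReal hg
    rwa [ENNReal.toReal_ofReal (h₁0 g), ENNReal.toReal_ofReal (h₂0 g)] at this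
  · -- independence of the section
    intro ρ hρ hρ0 s' hs'_meas hs'_sec
    have hkey : ∀ x : G ⧸ K,
        ∫⁻ k : K, ENNReal.ofReal (ρ (s x * (k : G))) ∂μK
          = ∫⁻ k : K, ENNReal.ofReal (ρ (s' x * (k : G))) ∂μK := by
      intro x
      have hk0_mem : (s x)⁻¹ * s' x ∈ K := by
        rw [← QuotientGroup.eq_one_iff]
        show ((QuotientGroup.mk ((s x)⁻¹ * s' x)) : G ⧸ K) = 1
        rw [QuotientGroup.mk_mul, QuotientGroup.mk_inv,
          show (QuotientGroup.mk (s x) : G ⧸ K) = x from hs_sec x,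
          show (QuotientGroup.mk (s' x) : G ⧸ K) = x from hs'_sec x]
        exact inv_mul_cancel _
      set k₀ : K := ⟨(s x)⁻¹ * s' x, hk0_mem⟩ with hk0_def
      have hs' : s' x = s x * (k₀ : G) := by rw [hk0_def]; group
      calc ∫⁻ k : K, ENNReal.ofReal (ρ (s x * (k : G))) ∂μK
          = ∫⁻ k : K, ENNReal.ofReal (ρ (s x * ((k₀ * k : K) : G))) ∂μK :=
            (lintegral_mul_left_eq_self (μ := μK)
              (fun k : K => ENNReal.ofReal (ρ (s x * (k : G)))) k₀).symm
        _ = ∫⁻ k : K, ENNReal.ofReal (ρ (s' x * (k : G))) ∂μK := by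
            refine lintegral_congr fun k => ?_
            have h : s x * ((k₀ * k : K) : G) = s' x * (k : G) := by
              rw [Subgroup.coe_mul, hs', mul_assoc]
              try group
              rw [hs']
            rw [h]
    constructor
    · intro h; filter_upwards [h] with x hx; rw [← hkey x]; exact hx
    · intro h; filter_upwards [h] with x hx; rw [hkey x]; exact hx
end

section
/- Let G be a l.c.s.c. group and K a compact U-central subgroup with μ_K(K) = 1. Then the Haar measure μ_G belongs to M_{G,K}; conversely, if μ_G ∈ M_{G,K} then μ_K(K) = 1 and K is compact. Consequently, for a compact U-central subgroup K, a strongly continuous irreducible unitary representation U is square integrable if and only if it is square integrable modulo K. -/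
open MeasureTheory
open scoped InnerProductSpace ENNReal Pointwise

/-- **For a compact `U`-central subgroup `K` (with `μ_K(K) = 1`), the Haar measure `μ_G`
belongs to `M_{G,K}`, and conversely; consequently `U` is square integrable iff it is
square integrable modulo `K`.** -/
theorem sq_int_iff_sq_int_mod_compact
    {G : Type*} [Group G] [TopologicalSpace G] [IsTopologicalGroup G]
    [LocallyCompactSpace G] [SecondCountableTopology G]
    [MeasurableSpace G] [BorelSpace G]
    {H : Type*} [NormedAddCommGroup H] [InnerProductSpace ℂ H]
    [CompleteSpace H] [TopologicalSpace.SeparableSpace H]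
    (U : G → H →L[ℂ] H)
    (hU1 : U 1 = 1) (hUmul : ∀ g h : G, U (g * h) = U g * U h)
    (hUunitary : ∀ g : G, U g ∈ unitary (H →L[ℂ] H))
    (hUcont : ∀ ψ : H, Continuous fun g : G => U g ψ)
    (hUirr : ∀ V : Submodule ℂ H, IsClosed (V : Set H) →
      (∀ g : G, ∀ ψ ∈ V, U g ψ ∈ V) → V = ⊥ ∨ V = ⊤)
    -- K is a U-central subgroup with character χ
    (K : Subgroup G) [K.Normal] (hKclosed : IsClosed (K : Set G))
    [MeasurableSpace (G ⧸ K)] [BorelSpace (G ⧸ K)]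
    [MeasurableSpace K] [BorelSpace K]
    (χ : K →* Circle) (hχcont : Continuous χ)
    (hχ : ∀ (k : K) (g : G), U ((k : G) * g) = (χ k : ℂ) • U g)
    (hχ' : ∀ (k : K) (g : G), U (g * (k : G)) = (χ k : ℂ) • U g)
    (μG : Measure G) [μG.IsHaarMeasure]
    (μX : Measure (G ⧸ K)) [μX.IsHaarMeasure]
    (μK : Measure K) [μK.IsHaarMeasure]
    (s : G ⧸ K → G) (hs_meas : Measurable s)
    (hs_sec : ∀ x : G ⧸ K, QuotientGroup.mk (s x) = x) (hs_one : s 1 = 1)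
    (hnorm : ∀ f : G → ℝ≥0∞, Measurable f →
      ∫⁻ g, f g ∂μG = ∫⁻ p : (G ⧸ K) × K, f (s p.1 * (p.2 : G)) ∂μX.prod μK) :
    -- if K is compact and μ_K(K) = 1 then μ_G ∈ M_{G,K}
    ((IsCompact (K : Set G) → μK Set.univ = 1 →
      (μG ≪ μG ∧ ∀ C : Set G, IsCompact C →
        μG (C * (K : Set G)) = μX ((QuotientGroup.mk : G → G ⧸ K) '' C))) ∧
    -- conversely, if μ_G ∈ M_{G,K} then μ_K(K) = 1 and K is compact
    ((∀ C : Set G, IsCompact C →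
        μG (C * (K : Set G)) = μX ((QuotientGroup.mk : G → G ⧸ K) '' C)) →
      μK Set.univ = 1 ∧ IsCompact (K : Set G))) ∧
    -- if K is compact (with μ_K(K) = 1), U is square integrable iff
    -- it is square integrable modulo K
    (IsCompact (K : Set G) → μK Set.univ = 1 →
      ((∃ ψ : H, ψ ≠ 0 ∧ ∃ φ : H, φ ≠ 0 ∧
          Integrable (fun g : G => ‖⟪U g ψ, φ⟫_ℂ‖ ^ 2) μG) ↔
        (∃ ψ : H, ψ ≠ 0 ∧ ∃ φ : H, φ ≠ 0 ∧ ∃ μ' : Measure G,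
          (μ' ≪ μG ∧ ∀ C : Set G, IsCompact C →
            μ' (C * (K : Set G)) = μX ((QuotientGroup.mk : G → G ⧸ K) '' C)) ∧
          Integrable (fun g : G => ‖⟪U g ψ, φ⟫_ℂ‖ ^ 2) μ'))) := by
  haveI hKC : IsClosed (K : Set G) := hKclosed
  haveI : LocallyCompactSpace K := hKclosed.locallyCompactSpace
  haveI : T3Space (G ⧸ K) := QuotientGroup.instT3Space K
  haveI : SecondCountableTopology K :=
    TopologicalSpace.Subtype.secondCountableTopology (K : Set G)
  haveI : SigmaFinite μK := inferInstance
  classical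
  have hmk_cont : Continuous (QuotientGroup.mk : G → G ⧸ K) := QuotientGroup.continuous_mk
  have hmk_meas : Measurable (QuotientGroup.mk : G → G ⧸ K) := hmk_cont.measurable
  -- saturation lemma
  have h_satur : ∀ C : Set G,
      (QuotientGroup.mk : G → G ⧸ K) ⁻¹' ((QuotientGroup.mk : G → G ⧸ K) '' C)
        = C * (K : Set G) := by
    intro C
    ext g
    simp only [Set.mem_preimage, Set.mem_image, Set.mem_mul]
    constructor
    · rintro ⟨c, hc, hcg⟩
      exact ⟨c, hc, c⁻¹ * g, QuotientGroup.eq.mp hcg, by group⟩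
    · rintro ⟨c, hc, k, hk, rfl⟩
      exact ⟨c, hc, QuotientGroup.eq.mpr (by simpa using hk)⟩
  have h_img_meas : ∀ C : Set G, IsCompact C →
      MeasurableSet ((QuotientGroup.mk : G → G ⧸ K) '' C) := fun C hC =>
    ((hC.image hmk_cont).isClosed).measurableSet
  -- the basic disintegration identity
  have lemma1 : ∀ B : Set (G ⧸ K), MeasurableSet B →
      μG ((QuotientGroup.mk : G → G ⧸ K) ⁻¹' B) = μX B * μK Set.univ := by
    intro B hB
    have hf : Measurable (((QuotientGroup.mk : G → G ⧸ K) ⁻¹' B).indicator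
        (1 : G → ℝ≥0∞)) := measurable_one.indicator (hmk_meas hB)
    have h1 := hnorm _ hf
    rw [lintegral_indicator_one (hmk_meas hB)] at h1
    have h2 : ∀ q : (G ⧸ K) × K,
        (((QuotientGroup.mk : G → G ⧸ K) ⁻¹' B).indicator (1 : G → ℝ≥0∞))
          (s q.1 * (q.2 : G)) = B.indicator (1 : (G ⧸ K) → ℝ≥0∞) q.1 := by
      intro q
      have hq : (QuotientGroup.mk (s q.1 * (q.2 : G)) : G ⧸ K) = q.1 := by
        rw [QuotientGroup.mk_mul, hs_sec, (QuotientGroup.eq_one_iff _).mpr q.2.2, mul_one]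
      by_cases hx : q.1 ∈ B
      · rw [Set.indicator_of_mem (by rw [Set.mem_preimage, hq]; exact hx),
          Set.indicator_of_mem hx]
        rfl
      · rw [Set.indicator_of_notMem (by rw [Set.mem_preimage, hq]; exact hx),
          Set.indicator_of_notMem hx]
    rw [lintegral_congr h2] at h1
    have hBi : Measurable (B.indicator (1 : (G ⧸ K) → ℝ≥0∞)) := measurable_one.indicator hB
    rw [show (∫⁻ q : (G ⧸ K) × K, B.indicator 1 q.1 ∂μX.prod μK)
          = μK Set.univ * μX B from by
        rw [← lintegral_map hBi measurable_fst, Measure.map_fst_prod,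
          lintegral_smul_measure, lintegral_indicator_one hB, smul_eq_mul]] at h1
    rw [h1, mul_comm]
  -- the fixed compact neighborhood of 1
  obtain ⟨C₀, hC₀c, hC₀n⟩ := exists_compact_mem_nhds (1 : G)
  have h1V : (1 : G) ∈ interior C₀ := mem_interior_iff_mem_nhds.2 hC₀n
  have hVo : IsOpen (interior C₀) := isOpen_interior
  have himg_pos : (0 : ℝ≥0∞) < μX ((QuotientGroup.mk : G → G ⧸ K) '' C₀) := by
    refine lt_of_lt_of_le ?_
      (measure_mono (Set.image_mono (interior_subset : interior C₀ ⊆ C₀)))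
    exact (QuotientGroup.isOpenMap_coe _ hVo).measure_pos μX
      ⟨QuotientGroup.mk 1, 1, h1V, rfl⟩
  have himg_fin : μX ((QuotientGroup.mk : G → G ⧸ K) '' C₀) < ∞ :=
    (hC₀c.image hmk_cont).measure_lt_top
  -- converse: μK K = 1
  have claim_mu : (∀ C : Set G, IsCompact C →
      μG (C * (K : Set G)) = μX ((QuotientGroup.mk : G → G ⧸ K) '' C)) →
      μK Set.univ = 1 := by
    intro h
    have h1 := lemma1 _ (h_img_meas C₀ hC₀c)
    rw [h_satur C₀, h C₀ hC₀c] at h1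
    have h2 : μX ((QuotientGroup.mk : G → G ⧸ K) '' C₀) * μK Set.univ
        = μX ((QuotientGroup.mk : G → G ⧸ K) '' C₀) * 1 := by
      rw [mul_one]; exact h1.symm
    exact (ENNReal.mul_right_inj himg_pos.ne' himg_fin.ne).mp h2
  -- converse: K is compact
  have claim_cpt : (∀ C : Set G, IsCompact C →
      μG (C * (K : Set G)) = μX ((QuotientGroup.mk : G → G ⧸ K) '' C)) →
      IsCompact (K : Set G) := by
    intro h
    by_contra hKnc
    have hW : IsCompact (C₀ * C₀⁻¹) := hC₀c.mul hC₀c.inv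
    have h1W : (1 : G) ∈ C₀ * C₀⁻¹ :=
      ⟨1, mem_of_mem_nhds hC₀n, 1⁻¹, Set.inv_mem_inv.mpr (mem_of_mem_nhds hC₀n), by group⟩
    -- arbitrarily many disjoint translates
    have step : ∀ n : ℕ, ∃ S : Finset G, S.card = n ∧ (↑S : Set G) ⊆ (K : Set G) ∧
        (↑S : Set G).PairwiseDisjoint (fun g => g • interior C₀) := by
      intro n
      induction n with
      | zero => exact ⟨∅, rfl, by simp, by simp⟩
      | succ n ih =>
        obtain ⟨S, hcard, hSK, hSd⟩ := ih
        have hT : IsCompact (⋃ g ∈ S, g • (C₀ * C₀⁻¹)) :=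
          S.finite_toSet.isCompact_biUnion fun g _ => hW.smul g
        have hnot : ¬ (K : Set G) ⊆ ⋃ g ∈ S, g • (C₀ * C₀⁻¹) := fun hsub =>
          hKnc (hT.of_isClosed_subset hKclosed hsub)
        obtain ⟨x, hxK, hxT⟩ := Set.not_subset.mp hnot
        have hxS : x ∉ S := by
          intro hxS
          exact hxT (Set.mem_biUnion hxS ⟨1, h1W, by simp⟩)
        refine ⟨insert x S, by rw [Finset.card_insert_of_notMem hxS, hcard], ?_, ?_⟩
        · rw [Finset.coe_insert]
          exact Set.insert_subset hxK hSK
        · rw [Finset.coe_insert]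
          refine hSd.insert ?_
          intro j hj _
          rw [Set.disjoint_left]
          rintro a ⟨v, hv, rfl⟩ ⟨v', hv', hev⟩
          apply hxT
          refine Set.mem_biUnion hj ⟨v' * v⁻¹,
            Set.mul_mem_mul (interior_subset hv') (Set.inv_mem_inv.mpr (interior_subset hv)),
            ?_⟩
          simp only [smul_eq_mul] at hev ⊢
          rw [← mul_assoc, hev, mul_inv_cancel_right]
    -- each translate sits in C₀ * K
    have hcover : ∀ S : Finset G, (↑S : Set G) ⊆ (K : Set G) →
        (⋃ g ∈ S, g • interior C₀) ⊆ C₀ * (K : Set G) := by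
      intro S hSK
      refine Set.iUnion₂_subset fun g hg => ?_
      rintro a ⟨v, hv, rfl⟩
      have hgK : g ∈ K := hSK hg
      have hconj : v⁻¹ * g * v⁻¹⁻¹ ∈ K := Subgroup.Normal.conj_mem ‹K.Normal› g hgK v⁻¹
      have h2 : g • v = v * (v⁻¹ * g * v⁻¹⁻¹) := by simp only [smul_eq_mul]; group
      show g • v ∈ C₀ * (K : Set G)
      rw [h2]
      exact Set.mul_mem_mul (interior_subset hv) hconj
    have hVpos : (0 : ℝ≥0∞) < μG (interior C₀) := hVo.measure_pos μG ⟨1, h1V⟩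
    have hVfin : μG (interior C₀) < ∞ :=
      lt_of_le_of_lt (measure_mono interior_subset) hC₀c.measure_lt_top
    have hbound : ∀ n : ℕ, (n : ℝ≥0∞) * μG (interior C₀)
        ≤ μX ((QuotientGroup.mk : G → G ⧸ K) '' C₀) := by
      intro n
      obtain ⟨S, hcard, hSK, hSd⟩ := step n
      have hsum : μG (⋃ g ∈ S, g • interior C₀) = (n : ℝ≥0∞) * μG (interior C₀) := by
        calc μG (⋃ g ∈ S, g • interior C₀) = ∑ g ∈ S, μG (g • interior C₀) :=
              measure_biUnion_finset hSd fun g _ => (hVo.smul g).measurableSet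
          _ = ∑ _g ∈ S, μG (interior C₀) :=
              Finset.sum_congr rfl fun g _ => measure_smul μG g (interior C₀)
          _ = (n : ℝ≥0∞) * μG (interior C₀) := by
              rw [Finset.sum_const, hcard, nsmul_eq_mul]
      rw [← hsum, ← h C₀ hC₀c]
      exact measure_mono (hcover S hSK)
    obtain ⟨n, hn⟩ := ENNReal.exists_nat_gt
      (ENNReal.div_lt_top himg_fin.ne hVpos.ne').ne
    have : (n : ℝ≥0∞) ≤ μX ((QuotientGroup.mk : G → G ⧸ K) '' C₀) / μG (interior C₀) :=
      (ENNReal.le_div_iff_mul_le (Or.inl hVpos.ne') (Or.inl hVfin.ne)).mpr (hbound n)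
    exact absurd this (not_le.mpr hn)
  -- μG ∈ M iff direction (given μK = 1)
  have part1a : μK Set.univ = 1 → ∀ C : Set G, IsCompact C →
      μG (C * (K : Set G)) = μX ((QuotientGroup.mk : G → G ⧸ K) '' C) := by
    intro hμK1 C hC
    rw [← h_satur C, lemma1 _ (h_img_meas C hC), hμK1, mul_one]
  refine ⟨⟨fun _ hμK1 => ⟨Measure.AbsolutelyContinuous.rfl, part1a hμK1⟩,
    fun h => ⟨claim_mu h, claim_cpt h⟩⟩, ?_⟩
  -- Part 2
  intro hKcpt hμK1
  -- the key comparison lemma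
  have key : ∀ μ' : Measure G, (∀ C : Set G, IsCompact C →
      μ' (C * (K : Set G)) = μX ((QuotientGroup.mk : G → G ⧸ K) '' C)) →
      ∀ fe : G → ℝ≥0∞, Measurable fe → (∀ (g : G) (k : K), fe (g * (k : G)) = fe g) →
      ∫⁻ g, fe g ∂μG ≤ ∫⁻ g, fe g ∂μ' := by
    intro μ' hμ' fe hfe hfe_inv
    set F : G ⧸ K → ℝ≥0∞ := fun x => fe (s x) with hF_def
    have hF : Measurable F := hfe.comp hs_meas
    have hFmk : ∀ g : G, F (QuotientGroup.mk g) = fe g := by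
      intro g
      have hmem : g⁻¹ * s (QuotientGroup.mk g) ∈ K :=
        QuotientGroup.eq.mp (hs_sec (QuotientGroup.mk g)).symm
      have : F (QuotientGroup.mk g) = fe (g * ((⟨g⁻¹ * s (QuotientGroup.mk g), hmem⟩ : K) : G)) := by
        simp only [hF_def]
        congr 1
        rw [mul_inv_cancel_left]
      rw [this, hfe_inv]
    -- LHS
    have hlhs : ∫⁻ g, fe g ∂μG = ∫⁻ x, F x ∂μX := by
      rw [hnorm fe hfe]
      rw [lintegral_congr fun q : (G ⧸ K) × K => hfe_inv (s q.1) q.2]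
      rw [show (∫⁻ q : (G ⧸ K) × K, F q.1 ∂μX.prod μK) = μK Set.univ * ∫⁻ x, F x ∂μX from by
        rw [← lintegral_map hF measurable_fst, Measure.map_fst_prod, lintegral_smul_measure, smul_eq_mul]]
      rw [hμK1, one_mul]
    -- lifting compacts
    have hlift : ∀ D : Set (G ⧸ K), IsCompact D →
        ∃ C : Set G, IsCompact C ∧ (QuotientGroup.mk : G → G ⧸ K) '' C = D := by
      intro D hD
      choose N hNc hNn using fun x : G ⧸ K => exists_compact_mem_nhds (s x)
      have hU : ∀ x ∈ D, (QuotientGroup.mk : G → G ⧸ K) '' interior (N x) ∈ nhds x :=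
        fun x _ => (QuotientGroup.isOpenMap_coe _ isOpen_interior).mem_nhds
          ⟨s x, mem_interior_iff_mem_nhds.2 (hNn x), hs_sec x⟩
      obtain ⟨t, -, ht⟩ := hD.elim_nhds_subcover _ hU
      refine ⟨(⋃ x ∈ t, N x) ∩ (QuotientGroup.mk : G → G ⧸ K) ⁻¹' D, ?_, ?_⟩
      · exact (t.finite_toSet.isCompact_biUnion fun x _ => hNc x).inter_right
          (hD.isClosed.preimage hmk_cont)
      · apply Set.Subset.antisymm
        · rintro y ⟨g, ⟨-, hgD⟩, rfl⟩
          exact hgD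
        · intro x hx
          obtain ⟨y, hyt, g, hg, hgx⟩ := by
            have := ht hx
            simpa only [Set.mem_iUnion, Set.mem_image, exists_prop] using this
          exact ⟨g, ⟨Set.mem_biUnion hyt (interior_subset hg), by rw [Set.mem_preimage, hgx]; exact hx⟩, hgx⟩
      -- RHS
    have hle : μX ≤ Measure.map (QuotientGroup.mk : G → G ⧸ K) μ' := by
      refine Measure.le_iff.mpr fun B hB => ?_
      refine le_of_forall_lt fun r hr => ?_
      obtain ⟨D, hDB, hDc, hrD⟩ :=
        MeasureTheory.Measure.InnerRegular.innerRegular (μ := μX) hB r hr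
      obtain ⟨C, hCc, hCD⟩ := hlift D hDc
      have hνD : Measure.map (QuotientGroup.mk : G → G ⧸ K) μ' D = μX D := by
        rw [Measure.map_apply hmk_meas hDc.isClosed.measurableSet, ← hCD, h_satur,
          hμ' C hCc, hCD]
      calc r < μX D := hrD
        _ = Measure.map (QuotientGroup.mk : G → G ⧸ K) μ' D := hνD.symm
        _ ≤ Measure.map (QuotientGroup.mk : G → G ⧸ K) μ' B := measure_mono hDB
    have hrhs : ∫⁻ x, F x ∂(Measure.map (QuotientGroup.mk : G → G ⧸ K) μ')
        = ∫⁻ g, fe g ∂μ' := by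
      rw [lintegral_map hF hmk_meas]
      exact lintegral_congr hFmk
    rw [hlhs, ← hrhs]
    exact lintegral_mono' hle le_rfl
  constructor
  · rintro ⟨ψ, hψ, φ, hφ, hint⟩
    exact ⟨ψ, hψ, φ, hφ, μG, ⟨Measure.AbsolutelyContinuous.rfl, part1a hμK1⟩, hint⟩
  · rintro ⟨ψ, hψ, φ, hφ, μ', ⟨-, hμ'⟩, hint⟩
    refine ⟨ψ, hψ, φ, hφ, ?_⟩
    set f : G → ℝ := fun g => ‖⟪U g ψ, φ⟫_ℂ‖ ^ 2 with hf_def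
    have hfc : Continuous f := (((hUcont ψ).inner continuous_const).norm).pow 2
    have hfinv : ∀ (g : G) (k : K), f (g * (k : G)) = f g := by
      intro g k
      have h1 : U (g * (k : G)) ψ = (χ k : ℂ) • (U g ψ) := by
        rw [hχ' k g]; rfl
      simp only [hf_def, h1, inner_smul_left]
      rw [norm_mul, RCLike.norm_conj]
      have : ‖(χ k : ℂ)‖ = 1 := by
        rw [Circle.norm_coe]
      rw [this, one_mul]
    have hfe_meas : Measurable fun g => (‖f g‖₊ : ℝ≥0∞) :=
      hfc.measurable.nnnorm.coe_nnreal_ennreal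
    have hfe_inv : ∀ (g : G) (k : K), (‖f (g * (k : G))‖₊ : ℝ≥0∞) = (‖f g‖₊ : ℝ≥0∞) := by
      intro g k; rw [hfinv]
    refine ⟨hfc.aestronglyMeasurable, ?_⟩
    calc ∫⁻ g, (‖f g‖₊ : ℝ≥0∞) ∂μG ≤ ∫⁻ g, (‖f g‖₊ : ℝ≥0∞) ∂μ' :=
          key μ' hμ' _ hfe_meas hfe_inv
      _ < ∞ := hint.hasFiniteIntegral
end

section
/- Let G be a l.c.s.c. group, K a closed normal subgroup, X = G/K, χ : K → 𝕋 a continuous homomorphism, and μ_{G,K} ∈ M_{G,K}. Let 𝒢^χ_{μ_{G,K}} ⊂ L²(G, μ_{G,K}) be the subspace of (classes of) Borel functions f with f(gk) = χ(k)^{-1} f(g) for all g ∈ G, k ∈ K. Then for any Borel section s : X → G, the map F_s : L²(X, μ_X) → L²(G, μ_{G,K}) defined by (F_s φ)(g) = χ(s(p(g))^{-1} g)^{-1} φ(p(g)) is a linear isometry with range exactly 𝒢^χ_{μ_{G,K}}. In particular 𝒢^χ_{μ_{G,K}} is a closed subspace of L²(G, μ_{G,K}). -/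
open MeasureTheory
open scoped ENNReal Pointwise

private lemma circle_nnnorm_inv_mul (k : Circle) (z : ℂ) :
    ‖((k : ℂ))⁻¹ * z‖₊ = ‖z‖₊ := by
  have h1 : ‖(k : ℂ)‖₊ = 1 := by
    ext
    simp [coe_nnnorm, Circle.norm_coe]
  rw [nnnorm_mul, nnnorm_inv, h1, inv_one, one_mul]

private lemma memLp_two_iff' {α E : Type*} [MeasurableSpace α] [NormedAddCommGroup E]
    {μ : Measure α} {f : α → E} :
    MemLp f 2 μ ↔ AEStronglyMeasurable f μ ∧ ∫⁻ a, (‖f a‖₊ : ℝ≥0∞) ^ 2 ∂μ < ∞ := by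
  rw [MemLp, eLpNorm_eq_lintegral_rpow_enorm_toReal (by norm_num) (by norm_num)]
  have ht : (2 : ℝ≥0∞).toReal = 2 := by norm_num
  rw [ht]
  have h2 : ∀ x : ℝ≥0∞, x ^ (2 : ℝ) = x ^ 2 := fun x => by
    rw [show (2 : ℝ) = ((2 : ℕ) : ℝ) by norm_num, ENNReal.rpow_natCast]
  simp_rw [h2, enorm_eq_nnnorm]
  rw [ENNReal.rpow_lt_top_iff_of_pos (by norm_num)]

/-- **The isometry `F_s : L²(X, μ_X) → L²(G, μ_{G,K})` onto the space `𝒢^χ_{μ_{G,K}}` of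
`χ`-equivariant functions.** For `μ' = ρ μ_G ∈ M_{G,K}` and a Borel section `s` (with
`σ(g) = s(p(g))⁻¹ g ∈ K`), the map `(F_s φ)(g) = χ(σ(g))⁻¹ φ(p(g))` is isometric from
`L²(X, μ_X)` into `L²(G, μ')`, takes values in the `χ`-equivariant functions
(`f(gk) = χ(k)⁻¹ f(g)`), and its range is exactly the set of (classes of) such
functions, which is therefore a closed subspace of `L²(G, μ')`. -/
theorem equivariant_subspace_isometry
    {G : Type*} [Group G] [TopologicalSpace G] [IsTopologicalGroup G]
    [LocallyCompactSpace G] [SecondCountableTopology G]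
    [MeasurableSpace G] [BorelSpace G]
    [MeasurableSpace Circle] [BorelSpace Circle]
    (K : Subgroup G) [K.Normal] (hKclosed : IsClosed (K : Set G))
    [MeasurableSpace (G ⧸ K)] [BorelSpace (G ⧸ K)]
    [MeasurableSpace K] [BorelSpace K]
    (χ : K →* Circle) (hχcont : Continuous χ)
    (μG : Measure G) [μG.IsHaarMeasure]
    (μX : Measure (G ⧸ K)) [μX.IsHaarMeasure]
    (μK : Measure K) [μK.IsHaarMeasure]
    (s : G ⧸ K → G) (hs_meas : Measurable s)
    (hs_sec : ∀ x : G ⧸ K, QuotientGroup.mk (s x) = x) (hs_one : s 1 = 1)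
    (hnorm : ∀ f : G → ℝ≥0∞, Measurable f →
      ∫⁻ g, f g ∂μG = ∫⁻ p : (G ⧸ K) × K, f (s p.1 * (p.2 : G)) ∂μX.prod μK)
    -- σ(g) = s(p(g))⁻¹ g ∈ K
    (σ : G → K)
    (hσ : ∀ g : G, (σ g : G) = (s (QuotientGroup.mk g))⁻¹ * g)
    -- μ' = ρ μ_G is a measure in M_{G,K}, given by its canonical density ρ
    (ρ : G → ℝ) (hρ_meas : Measurable ρ) (hρ_nonneg : ∀ g, 0 ≤ ρ g)
    (hρ_fibre : ∀ᵐ x ∂μX, ∫⁻ k : K, ENNReal.ofReal (ρ (s x * (k : G))) ∂μK = 1)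
    (μ' : Measure G) (hμ' : μ' = μG.withDensity fun g => ENNReal.ofReal (ρ g)) :
    -- F_s is an isometry from L²(X, μ_X) into L²(G, μ') with χ-equivariant values
    (∀ φ : G ⧸ K → ℂ, MemLp φ 2 μX →
      (MemLp (fun g : G => ((χ (σ g) : ℂ))⁻¹ * φ (QuotientGroup.mk g)) 2 μ' ∧
      (∫⁻ g, (‖((χ (σ g) : ℂ))⁻¹ * φ (QuotientGroup.mk g)‖₊ : ℝ≥0∞) ^ 2 ∂μ' =
        ∫⁻ x, (‖φ x‖₊ : ℝ≥0∞) ^ 2 ∂μX) ∧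
      (∀ (g : G) (k : K),
        ((χ (σ (g * (k : G))) : ℂ))⁻¹ * φ (QuotientGroup.mk (g * (k : G))) =
          ((χ k : ℂ))⁻¹ *
            (((χ (σ g) : ℂ))⁻¹ * φ (QuotientGroup.mk g))))) ∧
    -- the range of F_s is exactly the subspace 𝒢^χ_{μ'} of χ-equivariant L² functions
    (∀ f : G → ℂ, MemLp f 2 μ' →
      (∀ (g : G) (k : K), f (g * (k : G)) = ((χ k : ℂ))⁻¹ * f g) →
      ∃ φ : G ⧸ K → ℂ, MemLp φ 2 μX ∧
        ∀ g : G, f g = ((χ (σ g) : ℂ))⁻¹ * φ (QuotientGroup.mk g)) := by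
  subst hμ'
  -- instances
  haveI : LocallyCompactSpace K := hKclosed.isClosedEmbedding_subtypeVal.locallyCompactSpace
  haveI : SecondCountableTopology K := by
    exact TopologicalSpace.Subtype.secondCountableTopology _
  haveI : SigmaCompactSpace K := by infer_instance
  haveI : SigmaFinite μK := by infer_instance
  have hKemb : MeasurableEmbedding ((↑) : K → G) :=
    hKclosed.isClosedEmbedding_subtypeVal.measurableEmbedding
  have hp_meas : Measurable (QuotientGroup.mk : G → G ⧸ K) := continuous_quotient_mk'.measurable
  -- section identities
  have hmk_section : ∀ (x : G ⧸ K) (k : K), (QuotientGroup.mk (s x * (k : G)) : G ⧸ K) = x := by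
    intro x k
    have hk : (QuotientGroup.mk (k : G) : G ⧸ K) = 1 := (QuotientGroup.eq_one_iff _).mpr k.2
    rw [QuotientGroup.mk_mul, hk, mul_one, hs_sec]
  -- measurability of σ and χ ∘ σ
  have hσ_coe : Measurable fun g : G => ((σ g : G)) := by
    simp only [hσ]
    exact ((hs_meas.comp hp_meas).inv).mul measurable_id
  have hσ_meas : Measurable σ := hKemb.measurable_comp_iff.mp hσ_coe
  have hχC : Measurable fun k : K => ((χ k : ℂ)) := by
    have hc : Continuous fun k : K => ((χ k : ℂ)) := continuous_subtype_val.comp hχcont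
    exact hc.measurable
  have hχσ_meas : Measurable fun g : G => ((χ (σ g) : ℂ)) := hχC.comp hσ_meas
  have hχσinv_meas : Measurable fun g : G => ((χ (σ g) : ℂ))⁻¹ := hχσ_meas.inv
  have hm2 : Measurable fun q : (G ⧸ K) × K => s q.1 * ((q.2 : K) : G) :=
    (hs_meas.comp measurable_fst).mul (hKemb.measurable.comp measurable_snd)
  -- the key change-of-variables identity
  have key : ∀ h : (G ⧸ K) → ℝ≥0∞, Measurable h →
      ∫⁻ g, h (QuotientGroup.mk g) ∂(μG.withDensity fun g => ENNReal.ofReal (ρ g)) =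
        ∫⁻ x, h x ∂μX := by
    intro h hh
    have hcomp : Measurable fun g : G => h (QuotientGroup.mk g) := hh.comp hp_meas
    have hmeas : Measurable fun g : G => ENNReal.ofReal (ρ g) * h (QuotientGroup.mk g) :=
      hρ_meas.ennreal_ofReal.mul hcomp
    have e0 : ∫⁻ g, h (QuotientGroup.mk g) ∂(μG.withDensity fun g => ENNReal.ofReal (ρ g))
        = ∫⁻ g, ENNReal.ofReal (ρ g) * h (QuotientGroup.mk g) ∂μG :=
      lintegral_withDensity_eq_lintegral_mul μG hρ_meas.ennreal_ofReal hcomp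
    have e1 : ∫⁻ g, ENNReal.ofReal (ρ g) * h (QuotientGroup.mk g) ∂μG
        = ∫⁻ q : (G ⧸ K) × K, ENNReal.ofReal (ρ (s q.1 * (q.2 : G))) *
            h (QuotientGroup.mk (s q.1 * (q.2 : G))) ∂μX.prod μK := hnorm _ hmeas
    have e2 : ∫⁻ q : (G ⧸ K) × K, ENNReal.ofReal (ρ (s q.1 * (q.2 : G))) *
            h (QuotientGroup.mk (s q.1 * (q.2 : G))) ∂μX.prod μK
        = ∫⁻ q : (G ⧸ K) × K, ENNReal.ofReal (ρ (s q.1 * (q.2 : G))) * h q.1 ∂μX.prod μK :=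
      lintegral_congr fun q => by rw [hmk_section]
    have hmq : Measurable fun q : (G ⧸ K) × K =>
        ENNReal.ofReal (ρ (s q.1 * (q.2 : G))) * h q.1 :=
      ((hρ_meas.comp hm2).ennreal_ofReal).mul (hh.comp measurable_fst)
    have e3 : ∫⁻ q : (G ⧸ K) × K, ENNReal.ofReal (ρ (s q.1 * (q.2 : G))) * h q.1 ∂μX.prod μK
        = ∫⁻ x, ∫⁻ k : K, ENNReal.ofReal (ρ (s x * (k : G))) * h x ∂μK ∂μX :=
      lintegral_prod _ hmq.aemeasurable
    rw [e0, e1, e2, e3]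
    refine lintegral_congr_ae ?_
    filter_upwards [hρ_fibre] with x hx
    have hmx : AEMeasurable (fun k : K => ENNReal.ofReal (ρ (s x * (k : G)))) μK :=
      ((hρ_meas.comp (hKemb.measurable.const_mul (s x))).ennreal_ofReal).aemeasurable
    show ∫⁻ k : K, ENNReal.ofReal (ρ (s x * (k : G))) * h x ∂μK = h x
    rw [lintegral_mul_const'' _ hmx, hx, one_mul]
  -- null sets of μX pull back to null sets of μ'
  have keynull : ∀ S : Set (G ⧸ K), MeasurableSet S → μX S = 0 →
      (μG.withDensity fun g => ENNReal.ofReal (ρ g)) (QuotientGroup.mk ⁻¹' S) = 0 := by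
    intro S hS h0
    have h1 := key (S.indicator fun _ => (1 : ℝ≥0∞)) (measurable_const.indicator hS)
    rw [lintegral_indicator hS, setLIntegral_one, h0] at h1
    have h2 : ∀ g : G, S.indicator (fun _ => (1 : ℝ≥0∞)) (QuotientGroup.mk g)
        = (QuotientGroup.mk ⁻¹' S).indicator (fun _ => (1 : ℝ≥0∞)) g := by
      intro g; by_cases hg : QuotientGroup.mk g ∈ S <;> simp [Set.indicator, hg]
    simp_rw [h2] at h1
    rwa [lintegral_indicator (hp_meas hS), setLIntegral_one] at h1
  have keyae : ∀ {φ ψ : G ⧸ K → ℂ}, φ =ᵐ[μX] ψ →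
      (fun g : G => φ (QuotientGroup.mk g))
        =ᵐ[μG.withDensity fun g => ENNReal.ofReal (ρ g)]
      (fun g : G => ψ (QuotientGroup.mk g)) := by
    intro φ ψ hae
    obtain ⟨S, hsub, hSm, hS0⟩ := exists_measurable_superset_of_null (ae_iff.mp hae)
    have hss : {g : G | ¬ φ (QuotientGroup.mk g) = ψ (QuotientGroup.mk g)}
        ⊆ QuotientGroup.mk ⁻¹' S := fun g hg => hsub hg
    exact ae_iff.mpr (measure_mono_null hss (keynull S hSm hS0))
  have keyint : ∀ ψ : G ⧸ K → ℂ, Measurable ψ →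
      ∫⁻ g, (‖ψ (QuotientGroup.mk g)‖₊ : ℝ≥0∞) ^ 2
          ∂(μG.withDensity fun g => ENNReal.ofReal (ρ g))
        = ∫⁻ x, (‖ψ x‖₊ : ℝ≥0∞) ^ 2 ∂μX := by
    intro ψ hψ
    have hm : Measurable fun x : G ⧸ K => (‖ψ x‖₊ : ℝ≥0∞) ^ 2 := hψ.enorm.pow_const 2
    exact key _ hm
  constructor
  · -- Part 1 : F_s is a χ-equivariant isometry
    intro φ hφ
    obtain ⟨ψ, hψsm, hψae⟩ := hφ.1
    have hψmeas : Measurable ψ := hψsm.measurable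
    have haeq : (fun g : G => φ (QuotientGroup.mk g))
        =ᵐ[μG.withDensity fun g => ENNReal.ofReal (ρ g)]
        (fun g : G => ψ (QuotientGroup.mk g)) := keyae hψae
    have hb : ∫⁻ g, (‖((χ (σ g) : ℂ))⁻¹ * φ (QuotientGroup.mk g)‖₊ : ℝ≥0∞) ^ 2
          ∂(μG.withDensity fun g => ENNReal.ofReal (ρ g))
        = ∫⁻ x, (‖φ x‖₊ : ℝ≥0∞) ^ 2 ∂μX := by
      have e1 : ∀ g : G, (‖((χ (σ g) : ℂ))⁻¹ * φ (QuotientGroup.mk g)‖₊ : ℝ≥0∞) ^ 2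
          = (‖φ (QuotientGroup.mk g)‖₊ : ℝ≥0∞) ^ 2 := fun g => by
        rw [circle_nnnorm_inv_mul]
      simp_rw [e1]
      calc ∫⁻ g, (‖φ (QuotientGroup.mk g)‖₊ : ℝ≥0∞) ^ 2
            ∂(μG.withDensity fun g => ENNReal.ofReal (ρ g))
          = ∫⁻ g, (‖ψ (QuotientGroup.mk g)‖₊ : ℝ≥0∞) ^ 2
            ∂(μG.withDensity fun g => ENNReal.ofReal (ρ g)) :=
            lintegral_congr_ae (haeq.mono fun g hg =>
              congrArg (fun z : ℂ => (‖z‖₊ : ℝ≥0∞) ^ 2) hg)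
        _ = ∫⁻ x, (‖ψ x‖₊ : ℝ≥0∞) ^ 2 ∂μX := keyint ψ hψmeas
        _ = ∫⁻ x, (‖φ x‖₊ : ℝ≥0∞) ^ 2 ∂μX :=
            (lintegral_congr_ae (hψae.mono fun x hx =>
              congrArg (fun z : ℂ => (‖z‖₊ : ℝ≥0∞) ^ 2) hx)).symm
    have hmem : MemLp (fun g : G => ((χ (σ g) : ℂ))⁻¹ * φ (QuotientGroup.mk g)) 2
        (μG.withDensity fun g => ENNReal.ofReal (ρ g)) := by
      rw [memLp_two_iff']
      constructor
      · have hmm : Measurable fun g : G => ((χ (σ g) : ℂ))⁻¹ * ψ (QuotientGroup.mk g) :=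
          hχσinv_meas.mul (hψmeas.comp hp_meas)
        exact hmm.aestronglyMeasurable.congr
          (haeq.symm.mono fun g hg => congrArg (fun z : ℂ => ((χ (σ g) : ℂ))⁻¹ * z) hg)
      · rw [hb]
        exact (memLp_two_iff'.mp hφ).2
    refine ⟨hmem, hb, ?_⟩
    intro g k
    have hmkk : (QuotientGroup.mk (g * (k : G)) : G ⧸ K) = QuotientGroup.mk g := by
      rw [QuotientGroup.mk_mul, (QuotientGroup.eq_one_iff _).mpr k.2, mul_one]
    have hσk : σ (g * (k : G)) = σ g * k := by
      apply Subtype.ext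
      simp only [Subgroup.coe_mul, hσ, hmkk, mul_assoc]
    rw [hσk, hmkk, map_mul]
    simp only [Circle.coe_mul, mul_inv]
    ring
  · -- Part 2 : the range of F_s is the χ-equivariant subspace
    intro f hf hequiv
    obtain ⟨f', hf'sm, hff'⟩ := hf.1
    have hf'meas : Measurable f' := hf'sm.measurable
    obtain ⟨N, hNsub, hNm, hN0⟩ := exists_measurable_superset_of_null (ae_iff.mp hff')
    set φ : G ⧸ K → ℂ := fun x => f (s x) with hφdef
    have hid : ∀ g : G, f g = ((χ (σ g) : ℂ))⁻¹ * φ (QuotientGroup.mk g) := by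
      intro g
      have hg' : s (QuotientGroup.mk g) * ((σ g : K) : G) = g := by
        rw [hσ, mul_inv_cancel_left]
      calc f g = f (s (QuotientGroup.mk g) * ((σ g : K) : G)) := by rw [hg']
        _ = ((χ (σ g) : ℂ))⁻¹ * f (s (QuotientGroup.mk g)) := hequiv _ _
        _ = ((χ (σ g) : ℂ))⁻¹ * φ (QuotientGroup.mk g) := rfl
    -- the set where f and its measurable version differ is fibrewise ρ-null
    have hNind : Measurable fun g : G =>
        ENNReal.ofReal (ρ g) * N.indicator (fun _ => (1 : ℝ≥0∞)) g :=
      hρ_meas.ennreal_ofReal.mul (measurable_const.indicator hNm)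
    have hmq : Measurable fun q : (G ⧸ K) × K =>
        ENNReal.ofReal (ρ (s q.1 * (q.2 : G))) *
          N.indicator (fun _ => (1 : ℝ≥0∞)) (s q.1 * (q.2 : G)) := hNind.comp hm2
    have hNzero : ∫⁻ q : (G ⧸ K) × K,
        ENNReal.ofReal (ρ (s q.1 * (q.2 : G))) *
          N.indicator (fun _ => (1 : ℝ≥0∞)) (s q.1 * (q.2 : G)) ∂μX.prod μK = 0 := by
      have e1 : ∫⁻ g, ENNReal.ofReal (ρ g) * N.indicator (fun _ => (1 : ℝ≥0∞)) g ∂μG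
          = ∫⁻ q : (G ⧸ K) × K, ENNReal.ofReal (ρ (s q.1 * (q.2 : G))) *
              N.indicator (fun _ => (1 : ℝ≥0∞)) (s q.1 * (q.2 : G)) ∂μX.prod μK :=
        hnorm _ hNind
      have e0 : ∫⁻ g, N.indicator (fun _ => (1 : ℝ≥0∞)) g
            ∂(μG.withDensity fun g => ENNReal.ofReal (ρ g))
          = ∫⁻ g, ENNReal.ofReal (ρ g) * N.indicator (fun _ => (1 : ℝ≥0∞)) g ∂μG :=
        lintegral_withDensity_eq_lintegral_mul μG hρ_meas.ennreal_ofReal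
          (measurable_const.indicator hNm)
      rw [← e1, ← e0, lintegral_indicator hNm, setLIntegral_one, hN0]
    have hNfib : ∀ᵐ x ∂μX, ∀ᵐ (k : K) ∂μK,
        ENNReal.ofReal (ρ (s x * (k : G))) *
          N.indicator (fun _ => (1 : ℝ≥0∞)) (s x * (k : G)) = 0 := by
      rw [lintegral_prod _ hmq.aemeasurable] at hNzero
      have h1 := (lintegral_eq_zero_iff hmq.lintegral_prod_right').mp hNzero
      filter_upwards [h1] with x hx
      have hx' : ∫⁻ k : K, ENNReal.ofReal (ρ (s x * (k : G))) *
          N.indicator (fun _ => (1 : ℝ≥0∞)) (s x * (k : G)) ∂μK = 0 := hx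
      have hmx : Measurable fun k : K => ENNReal.ofReal (ρ (s x * (k : G))) *
          N.indicator (fun _ => (1 : ℝ≥0∞)) (s x * (k : G)) :=
        hNind.comp (hKemb.measurable.const_mul (s x))
      exact ((lintegral_eq_zero_iff hmx).mp hx').mono fun k hk => hk
    have hgood : ∀ᵐ x ∂μX,
        (∫⁻ k : K, ENNReal.ofReal (ρ (s x * (k : G))) ∂μK = 1) ∧
        ∀ᵐ (k : K) ∂μK, ρ (s x * (k : G)) = 0 ∨ s x * (k : G) ∉ N := by
      filter_upwards [hρ_fibre, hNfib] with x h1 h2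
      refine ⟨h1, h2.mono fun k hk => ?_⟩
      by_cases hmem : s x * (k : G) ∈ N
      · left
        rw [Set.indicator_of_mem hmem, mul_one] at hk
        exact le_antisymm (ENNReal.ofReal_eq_zero.mp hk) (hρ_nonneg _)
      · right; exact hmem
    -- a measurable representative of φ
    have hint_meas : StronglyMeasurable fun q : (G ⧸ K) × K =>
        ((χ q.2 : ℂ)) * f' (s q.1 * (q.2 : G)) * ((ρ (s q.1 * (q.2 : G)) : ℝ) : ℂ) := by
      apply Measurable.stronglyMeasurable
      exact ((hχC.comp measurable_snd).mul
        (hf'meas.comp hm2)).mul (Complex.measurable_ofReal.comp (hρ_meas.comp hm2))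
    set ψ : G ⧸ K → ℂ := fun x =>
      ∫ k : K, ((χ k : ℂ)) * f' (s x * (k : G)) * ((ρ (s x * (k : G)) : ℝ) : ℂ) ∂μK with hψdef
    have hψsm : StronglyMeasurable ψ := hint_meas.integral_prod_right'
    have hφψ : φ =ᵐ[μX] ψ := by
      filter_upwards [hgood] with x hx
      obtain ⟨hx1, hx2⟩ := hx
      have hcongr : ∀ᵐ (k : K) ∂μK,
          ((χ k : ℂ)) * f' (s x * (k : G)) * ((ρ (s x * (k : G)) : ℝ) : ℂ)
            = φ x * ((ρ (s x * (k : G)) : ℝ) : ℂ) := by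
        filter_upwards [hx2] with k hk
        rcases hk with h0 | hnN
        · rw [h0]; simp
        · have hfe : f (s x * (k : G)) = f' (s x * (k : G)) := by
            by_contra hne
            exact hnN (hNsub hne)
          rw [← hfe, hequiv (s x) k]
          have hne0 : ((χ k : ℂ)) ≠ 0 := Circle.coe_ne_zero _
          field_simp
          exact mul_comm _ _
      have hρmeasx : Measurable fun k : K => ρ (s x * (k : G)) :=
        hρ_meas.comp (hKemb.measurable.const_mul (s x))
      have hρreal : ∫ k : K, ρ (s x * (k : G)) ∂μK = 1 := by
        rw [integral_eq_lintegral_of_nonneg_ae (ae_of_all _ fun k => hρ_nonneg _)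
          hρmeasx.aestronglyMeasurable, hx1]
        simp
      have hρint : ∫ k : K, ((ρ (s x * (k : G)) : ℝ) : ℂ) ∂μK = 1 := by
        have h2 : ∫ k : K, (RCLike.ofReal (ρ (s x * (k : G))) : ℂ) ∂μK
            = ((∫ k : K, ρ (s x * (k : G)) ∂μK : ℝ) : ℂ) := integral_ofReal
        rw [hρreal] at h2
        exact h2.trans (by norm_num)
      have hcalc : ψ x = φ x := by
        rw [hψdef]
        calc ∫ k : K, ((χ k : ℂ)) * f' (s x * (k : G)) * ((ρ (s x * (k : G)) : ℝ) : ℂ) ∂μK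
            = ∫ k : K, φ x * ((ρ (s x * (k : G)) : ℝ) : ℂ) ∂μK := integral_congr_ae hcongr
          _ = φ x * ∫ k : K, ((ρ (s x * (k : G)) : ℝ) : ℂ) ∂μK := integral_const_mul _ _
          _ = φ x := by rw [hρint, mul_one]
      exact hcalc.symm
    -- the L² norm of φ equals the L² norm of f
    have hGmeas : Measurable fun g : G =>
        (‖f' g‖₊ : ℝ≥0∞) ^ 2 * ENNReal.ofReal (ρ g) :=
      (hf'meas.enorm.pow_const 2).mul hρ_meas.ennreal_ofReal
    have hmint : Measurable fun q : (G ⧸ K) × K =>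
        (‖f' (s q.1 * (q.2 : G))‖₊ : ℝ≥0∞) ^ 2 * ENNReal.ofReal (ρ (s q.1 * (q.2 : G))) :=
      hGmeas.comp hm2
    have hnorm_eq : ∫⁻ x, (‖φ x‖₊ : ℝ≥0∞) ^ 2 ∂μX
        = ∫⁻ g, (‖f g‖₊ : ℝ≥0∞) ^ 2 ∂(μG.withDensity fun g => ENNReal.ofReal (ρ g)) := by
      have step1 : ∫⁻ x, (‖φ x‖₊ : ℝ≥0∞) ^ 2 ∂μX
          = ∫⁻ x, ∫⁻ k : K, (‖f' (s x * (k : G))‖₊ : ℝ≥0∞) ^ 2 *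
              ENNReal.ofReal (ρ (s x * (k : G))) ∂μK ∂μX := by
        refine lintegral_congr_ae ?_
        filter_upwards [hgood] with x hx
        obtain ⟨hx1, hx2⟩ := hx
        have hae2 : ∀ᵐ (k : K) ∂μK, (‖φ x‖₊ : ℝ≥0∞) ^ 2 * ENNReal.ofReal (ρ (s x * (k : G)))
            = (‖f' (s x * (k : G))‖₊ : ℝ≥0∞) ^ 2 * ENNReal.ofReal (ρ (s x * (k : G))) := by
          filter_upwards [hx2] with k hk
          rcases hk with h0 | hnN
          · rw [h0]; simp
          · have hfe : f (s x * (k : G)) = f' (s x * (k : G)) := by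
              by_contra hne
              exact hnN (hNsub hne)
            rw [← hfe, hequiv (s x) k, circle_nnnorm_inv_mul]
        calc (‖φ x‖₊ : ℝ≥0∞) ^ 2
            = (‖φ x‖₊ : ℝ≥0∞) ^ 2 * ∫⁻ k : K, ENNReal.ofReal (ρ (s x * (k : G))) ∂μK := by
              rw [hx1, mul_one]
          _ = ∫⁻ k : K, (‖φ x‖₊ : ℝ≥0∞) ^ 2 * ENNReal.ofReal (ρ (s x * (k : G))) ∂μK :=
              (lintegral_const_mul' _ _ (ENNReal.pow_ne_top ENNReal.coe_ne_top)).symm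
          _ = ∫⁻ k : K, (‖f' (s x * (k : G))‖₊ : ℝ≥0∞) ^ 2 *
              ENNReal.ofReal (ρ (s x * (k : G))) ∂μK := lintegral_congr_ae hae2
      have hpow : Measurable fun g : G => (‖f' g‖₊ : ℝ≥0∞) ^ 2 := hf'meas.enorm.pow_const 2
      calc ∫⁻ x, (‖φ x‖₊ : ℝ≥0∞) ^ 2 ∂μX
          = ∫⁻ q : (G ⧸ K) × K, (‖f' (s q.1 * (q.2 : G))‖₊ : ℝ≥0∞) ^ 2 *
              ENNReal.ofReal (ρ (s q.1 * (q.2 : G))) ∂μX.prod μK :=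
            step1.trans (lintegral_prod _ hmint.aemeasurable).symm
        _ = ∫⁻ g, (‖f' g‖₊ : ℝ≥0∞) ^ 2 * ENNReal.ofReal (ρ g) ∂μG := (hnorm _ hGmeas).symm
        _ = ∫⁻ g, (‖f' g‖₊ : ℝ≥0∞) ^ 2 ∂(μG.withDensity fun g => ENNReal.ofReal (ρ g)) := by
            rw [lintegral_withDensity_eq_lintegral_mul μG hρ_meas.ennreal_ofReal hpow]
            exact lintegral_congr fun g => mul_comm _ _
        _ = ∫⁻ g, (‖f g‖₊ : ℝ≥0∞) ^ 2 ∂(μG.withDensity fun g => ENNReal.ofReal (ρ g)) :=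
            (lintegral_congr_ae (hff'.mono fun g hg =>
              congrArg (fun z : ℂ => (‖z‖₊ : ℝ≥0∞) ^ 2) hg)).symm
    have hφmem : MemLp φ 2 μX := by
      rw [memLp_two_iff']
      refine ⟨⟨ψ, hψsm, hφψ⟩, ?_⟩
      rw [hnorm_eq]
      exact (memLp_two_iff'.mp hf).2
    exact ⟨φ, hφmem, hid⟩
end
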